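/- For any unitary operator U on a Hilbert space H, any unit vector φ, and any continuous function f on the unit circle, ⟨φ, f(U) φ⟩ = lim_{r→1⁻} (1/2π) ∫₀^{2π} (1−r²) ⟨φ, (U − re^{iθ})^{-1}(U^{-1} − re^{-iθ})^{-1} φ⟩ f(e^{iθ}) dθ. -/

import Mathlib

/-!
For `|r| < 1` and `z`, `ζ` on the unit circle, `(1 - r²) (z - rζ)⁻¹ (z⁻¹ - r ζ̄)⁻¹` is the Poisson
kernel `P(rz, ζ) = (1 - r²) / |ζ - rz|²`. By the functional calculus the integrand is therefore
`⟪φ, P(rU, e^{iθ}) f(e^{iθ}) φ⟫`, and since the functional calculus commutes with integrals, the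
`r`-th average is `⟪φ, (P_r f)(U) φ⟫`, where `(P_r f)(z)` is the Poisson integral of `f`
evaluated at `rz`. The Poisson kernel is a nonnegative approximate identity (total mass `1`, second
moment `∫ P(rζ, ·) |· - ζ|² = 2 (1 - r)`), so `P_r f → f` uniformly on the unit circle, which
contains the spectrum of `U`, and the functional calculus is continuous for uniform convergence on
the spectrum.
-/

open scoped InnerProductSpace
open Complex ContinuousLinearMap Filter
open Metric Real InnerProductSpace ComplexConjugate Topology MeasureTheory

section PoissonKernel

lemma norm_sub_sq_eq_of_norm_eq_one {z ζ : ℂ} (hz : ‖z‖ = 1) (hζ : ‖ζ‖ = 1) :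
    ‖z - ζ‖ ^ 2 = 2 * (1 - (z * conj ζ).re) := by
  have hzz : z * conj z = 1 := by rw [mul_conj', hz]; simp
  have hζζ : ζ * conj ζ = 1 := by rw [mul_conj', hζ]; simp
  rw [← ofReal_inj]
  push_cast
  rw [← mul_conj', map_sub, re_eq_add_conj]
  simp only [map_mul, conj_conj]
  linear_combination hzz + hζζ

lemma poissonKernel_zero_mul_eq (r : ℝ) {z ζ : ℂ} (hz : ‖z‖ = 1) (hζ : ‖ζ‖ = 1) :
    poissonKernel 0 (r * z) ζ = (1 - r ^ 2) / ‖z - r * ζ‖ ^ 2 := by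
  have hzz : z * conj z = 1 := by rw [mul_conj', hz]; simp
  have hζζ : ζ * conj ζ = 1 := by rw [mul_conj', hζ]; simp
  have hsymm : ‖ζ - r * z‖ ^ 2 = ‖z - r * ζ‖ ^ 2 := by
    rw [← ofReal_inj]
    push_cast
    rw [← mul_conj', ← mul_conj']
    simp only [map_sub, map_mul, conj_ofReal]
    linear_combination (1 - (r : ℂ) ^ 2) * (hζζ - hzz)
  rw [poissonKernel_def, sub_zero, sub_zero, hζ, norm_mul, hz, norm_real, Real.norm_eq_abs,
    mul_one, sq_abs, one_pow, hsymm]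

lemma poissonKernel_zero_nonneg {w z : ℂ} (hw : ‖w‖ < 1) (hz : ‖z‖ = 1) :
    0 ≤ poissonKernel 0 w z := by
  rw [poissonKernel_def, sub_zero, sub_zero, hz]
  exact div_nonneg (by nlinarith [norm_nonneg w]) (sq_nonneg _)

lemma continuousOn_poissonKernel_zero :
    ContinuousOn (fun p : ℂ × ℂ ↦ poissonKernel 0 p.1 p.2) (ball 0 1 ×ˢ sphere 0 1) := by
  simp_rw [poissonKernel_def, sub_zero]
  refine ContinuousOn.div (by fun_prop) (by fun_prop) fun p ⟨hw, hz⟩ ↦ ?_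
  refine pow_ne_zero 2 (norm_ne_zero_iff.mpr (sub_ne_zero.mpr fun h ↦ ?_))
  rw [mem_ball_zero_iff, ← h, mem_sphere_zero_iff_norm.mp hz] at hw
  exact lt_irrefl 1 hw

lemma continuousOn_poissonKernel_zero_mul {r : ℝ} (hr : |r| < 1) :
    ContinuousOn (fun p : ℂ × ℂ ↦ poissonKernel 0 (r * p.2) p.1) (sphere 0 1 ×ˢ sphere 0 1) :=
  continuousOn_poissonKernel_zero.comp (f := fun p : ℂ × ℂ ↦ ((r : ℂ) * p.2, p.1)) (by fun_prop)
    fun p ⟨hζ, hz⟩ ↦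
    ⟨by simpa [mem_sphere_zero_iff_norm.mp hz] using hr, hζ⟩

lemma circleAverage_poissonKernel {w : ℂ} (hw : w ∈ ball (0 : ℂ) 1) :
    circleAverage (poissonKernel 0 w) 0 1 = 1 := by
  simpa [Pi.mul_def] using (harmonicOnNhd_const (1 : ℝ)).circleAverage_poissonKernel_smul
    (c := 0) (R := 1) hw

lemma circleAverage_poissonKernel_smul_norm_sub_sq {w ζ : ℂ} (hw : w ∈ ball (0 : ℂ) 1)
    (hζ : ‖ζ‖ = 1) :
    circleAverage (poissonKernel 0 w • fun z ↦ ‖z - ζ‖ ^ 2) 0 1 = 2 * (1 - (w * conj ζ).re) := by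
  -- on the unit circle `‖z - ζ‖²` agrees with the harmonic function `2 (1 - Re (z ζ̄))`
  have hharm : HarmonicOnNhd (fun z : ℂ ↦ 2 * (1 - (z * conj ζ).re)) (closedBall 0 1) := by
    intro z _
    have : HarmonicAt (fun z : ℂ ↦ (z * conj ζ).re) z :=
      (analyticAt_id.mul analyticAt_const).harmonicAt_re
    exact ((harmonicAt_const 1).sub this).const_smul (c := (2 : ℝ))
  rw [← hharm.circleAverage_poissonKernel_smul hw]
  refine circleAverage_congr_sphere fun z hz ↦ ?_
  simp only [Pi.smul_apply', smul_eq_mul,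
    norm_sub_sq_eq_of_norm_eq_one (by simpa using hz) hζ]

end PoissonKernel

section ApproximateIdentity

variable {E : Type*} [NormedAddCommGroup E]

lemma IsCompact.exists_norm_sub_le_add_mul_dist_sq {α : Type*} [PseudoMetricSpace α] {K : Set α}
    (hK : IsCompact K) {g : α → E} (hg : ContinuousOn g K) {ε : ℝ} (hε : 0 < ε) :
    ∃ C, ∀ x ∈ K, ∀ y ∈ K, ‖g x - g y‖ ≤ ε + C * dist x y ^ 2 := by
  obtain ⟨M, hM⟩ := hK.exists_bound_of_continuousOn hg
  obtain ⟨δ, hδ, hgδ⟩ := Metric.uniformContinuousOn_iff.mp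
    (hK.uniformContinuousOn_of_continuous hg) ε hε
  set C := 2 * max M 0 / δ ^ 2
  refine ⟨C, fun x hx y hy ↦ ?_⟩
  have hC : 0 ≤ C * dist x y ^ 2 := by positivity
  rcases lt_or_ge (dist x y) δ with hxy | hxy
  · linarith [dist_eq_norm (g x) (g y) ▸ hgδ x hx y hy hxy]
  · -- far apart points: `2 M ≤ C δ² ≤ C d(x, y)²`
    have hfar : 2 * max M 0 ≤ C * dist x y ^ 2 := by
      rw [div_mul_eq_mul_div, le_div_iff₀ (by positivity)]
      gcongr
    calc ‖g x - g y‖ ≤ ‖g x‖ + ‖g y‖ := norm_sub_le _ _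
      _ ≤ 2 * max M 0 := by linarith [hM x hx, hM y hy, le_max_left M 0]
      _ ≤ ε + C * dist x y ^ 2 := by linarith

variable [NormedSpace ℝ E]

lemma norm_circleAverage_le (f : ℂ → E) (c : ℂ) (R : ℝ) :
    ‖circleAverage f c R‖ ≤ circleAverage (fun z ↦ ‖f z‖) c R := by
  rw [circleAverage_def, circleAverage_def, norm_smul, smul_eq_mul, Real.norm_eq_abs,
    abs_of_pos (inv_pos.2 two_pi_pos)]
  gcongr
  exact intervalIntegral.norm_integral_le_integral_norm two_pi_pos.le

theorem ContinuousOn.circleAverage_of_uncurry {X : Type*} [TopologicalSpace X] {F : ℂ → X → E}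
    {c : ℂ} {R : ℝ} {s : Set X}
    (hF : ContinuousOn (Function.uncurry F) (sphere c |R| ×ˢ s)) :
    ContinuousOn (fun x ↦ circleAverage (F · x) c R) s := by
  rw [continuousOn_iff_continuous_domRestrict]
  refine
    (intervalIntegral.continuous_parametric_intervalIntegral_of_continuous' ?_ _ _).const_smul _
  exact hF.comp_continuous (f := fun p : s × ℝ ↦ (circleMap c R p.2, (p.1 : X))) (by fun_prop)
    fun p ↦ ⟨circleMap_mem_sphere' c R p.2, p.1.2⟩

lemma continuousOn_uncurry_poissonKernel_mul_smul {f : ℂ → E} (hf : ContinuousOn f (sphere 0 1))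
    {r : ℝ} (hr : |r| < 1) :
    ContinuousOn (Function.uncurry fun ζ z ↦ poissonKernel 0 (r * z) ζ • f ζ)
      (sphere 0 1 ×ˢ sphere 0 1) :=
  (continuousOn_poissonKernel_zero_mul hr).smul (hf.comp continuousOn_fst fun _ hp ↦ hp.1)

lemma continuousOn_circleAverage_poissonKernel_mul_smul {f : ℂ → E}
    (hf : ContinuousOn f (sphere 0 1)) {r : ℝ} (hr : |r| < 1) :
    ContinuousOn (fun z ↦ circleAverage (poissonKernel 0 (r * z) • f) 0 1) (sphere 0 1) :=
  ContinuousOn.circleAverage_of_uncurry (F := fun ζ z ↦ poissonKernel 0 (r * z) ζ • f ζ)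
    (by simpa only [abs_one] using continuousOn_uncurry_poissonKernel_mul_smul hf hr)

variable [CompleteSpace E]

lemma norm_circleAverage_poissonKernel_smul_sub_le {g : ℂ → E}
    (hg : ContinuousOn g (sphere 0 1)) {w ζ : ℂ} (hw : w ∈ ball (0 : ℂ) 1) (hζ : ‖ζ‖ = 1)
    {ε C : ℝ} (hgζ : ∀ z ∈ sphere (0 : ℂ) 1, ‖g z - g ζ‖ ≤ ε + C * ‖z - ζ‖ ^ 2) :
    ‖circleAverage (poissonKernel 0 w • g) 0 1 - g ζ‖ ≤ ε + C * (2 * (1 - (w * conj ζ).re)) := by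
  have hP : ContinuousOn (poissonKernel 0 w) (sphere 0 1) :=
    continuousOn_poissonKernel_zero.comp (f := fun z ↦ (w, z)) (by fun_prop) fun z hz ↦ ⟨hw, hz⟩
  have hPnonneg : ∀ z ∈ sphere (0 : ℂ) 1, 0 ≤ poissonKernel 0 w z := fun z hz ↦
    poissonKernel_zero_nonneg (mem_ball_zero_iff.mp hw) (mem_sphere_zero_iff_norm.mp hz)
  have hmass : circleAverage (fun z ↦ poissonKernel 0 w z • g ζ) 0 1 = g ζ := by
    rw [circleAverage_def, intervalIntegral.integral_smul_const, smul_smul, ← smul_eq_mul,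
      ← circleAverage_def, circleAverage_poissonKernel hw, one_smul]
  have hdiff : circleAverage (poissonKernel 0 w • g) 0 1 - g ζ =
      circleAverage (fun z ↦ poissonKernel 0 w z • (g z - g ζ)) 0 1 := by
    simp_rw [smul_sub]
    rw [circleAverage_fun_sub, hmass]
    · rfl
    · exact (hP.smul hg).circleIntegrable zero_le_one
    · exact (hP.smul continuousOn_const).circleIntegrable zero_le_one
  have hmass_int : CircleIntegrable (ε • poissonKernel 0 w) 0 1 :=
    (hP.const_smul ε).circleIntegrable zero_le_one
  have hmoment_int : CircleIntegrable (C • (poissonKernel 0 w • fun z ↦ ‖z - ζ‖ ^ 2)) 0 1 :=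
    ((hP.smul (by fun_prop)).const_smul C).circleIntegrable zero_le_one
  calc ‖circleAverage (poissonKernel 0 w • g) 0 1 - g ζ‖
      ≤ circleAverage (fun z ↦ ‖poissonKernel 0 w z • (g z - g ζ)‖) 0 1 :=
        hdiff ▸ norm_circleAverage_le _ _ _
    _ ≤ circleAverage (ε • poissonKernel 0 w + C • (poissonKernel 0 w • fun z ↦ ‖z - ζ‖ ^ 2))
          0 1 := by
        apply circleAverage_mono
        · exact (hP.smul (hg.sub continuousOn_const)).norm.circleIntegrable zero_le_one
        · exact hmass_int.add hmoment_int
        · intro z hz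
          rw [abs_one] at hz
          simp only [Pi.add_apply, Pi.smul_apply, Pi.mul_apply, smul_eq_mul]
          rw [norm_smul, Real.norm_of_nonneg (hPnonneg z hz)]
          linear_combination mul_le_mul_of_nonneg_left (hgζ z hz) (hPnonneg z hz)
    _ = ε + C * (2 * (1 - (w * conj ζ).re)) := by
        rw [circleAverage_add hmass_int hmoment_int,
          circleAverage_smul, circleAverage_smul, circleAverage_poissonKernel hw,
          circleAverage_poissonKernel_smul_norm_sub_sq hw hζ, smul_eq_mul, smul_eq_mul, mul_one]

theorem tendstoUniformlyOn_circleAverage_poissonKernel_smul {g : ℂ → E}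
    (hg : ContinuousOn g (sphere 0 1)) :
    TendstoUniformlyOn (fun (r : ℝ) ζ ↦ circleAverage (poissonKernel 0 (r * ζ) • g) 0 1) g
      (𝓝[<] 1) (sphere 0 1) := by
  rw [Metric.tendstoUniformlyOn_iff]
  intro ε hε
  obtain ⟨C, hC⟩ := (isCompact_sphere (0 : ℂ) 1).exists_norm_sub_le_add_mul_dist_sq hg
    (half_pos hε)
  have hsmall : ∀ᶠ r in 𝓝[<] (1 : ℝ), C * (2 * (1 - r)) < ε / 2 := by
    have : Tendsto (fun r : ℝ ↦ C * (2 * (1 - r))) (𝓝 1) (𝓝 0) := by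
      simpa using (((continuous_const (y := (1 : ℝ))).sub continuous_id).const_mul 2).const_mul C
        |>.tendsto 1
    exact (this.eventually (gt_mem_nhds (half_pos hε))).filter_mono nhdsWithin_le_nhds
  filter_upwards [hsmall, self_mem_nhdsWithin,
    (eventually_gt_nhds zero_lt_one).filter_mono nhdsWithin_le_nhds] with r hr hr1 hr0 ζ hζ
  have hζ1 : ‖ζ‖ = 1 := mem_sphere_zero_iff_norm.mp hζ
  have hw : (r : ℂ) * ζ ∈ ball (0 : ℂ) 1 := by
    simpa [hζ1, abs_of_pos hr0] using hr1
  have hre : ((r : ℂ) * ζ * conj ζ).re = r := by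
    rw [mul_assoc, mul_conj, normSq_eq_norm_sq, hζ1]
    simp
  have := norm_circleAverage_poissonKernel_smul_sub_le hg hw hζ1
    fun z hz ↦ dist_eq_norm z ζ ▸ hC z hz ζ hζ
  rw [hre] at this
  rw [dist_comm, dist_eq_norm]
  linarith

end ApproximateIdentity

section FunctionalCalculus

variable {A : Type*} [CStarAlgebra A]

section CircleAverage

variable {a : A} {F : ℂ → ℂ → ℂ} {c : ℂ} {R : ℝ}

lemma continuousOn_uncurry_comp_circleMap
    (hF : ContinuousOn (Function.uncurry F) (sphere c |R| ×ˢ spectrum ℂ a)) :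
    ContinuousOn (Function.uncurry fun θ z ↦ F (circleMap c R θ) z) (Set.univ ×ˢ spectrum ℂ a) :=
  hF.comp (f := fun p : ℝ × ℂ ↦ (circleMap c R p.1, p.2)) (by fun_prop)
    fun p hp ↦ ⟨circleMap_mem_sphere' c R p.1, hp.2⟩

theorem circleIntegrable_cfc (ha : IsStarNormal a)
    (hF : ContinuousOn (Function.uncurry F) (sphere c |R| ×ˢ spectrum ℂ a)) :
    CircleIntegrable (fun ξ ↦ cfc (F ξ) a) c R := by
  obtain ⟨M, hM⟩ :=
    ((isCompact_sphere c |R|).prod (spectrum.isCompact a)).exists_bound_of_continuousOn hF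
  rw [CircleIntegrable, intervalIntegrable_iff_integrableOn_Ioc_of_le two_pi_pos.le]
  exact integrable_cfc _ (fun _ ↦ M) a (continuousOn_uncurry_comp_circleMap hF)
    (ae_of_all _ fun θ z hz ↦ hM (circleMap c R θ, z) ⟨circleMap_mem_sphere' c R θ, hz⟩)
    (hasFiniteIntegral_const M)

theorem cfc_circleAverage (ha : IsStarNormal a)
    (hF : ContinuousOn (Function.uncurry F) (sphere c |R| ×ˢ spectrum ℂ a)) :
    cfc (fun z ↦ circleAverage (F · z) c R) a = circleAverage (fun ξ ↦ cfc (F ξ) a) c R := by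
  obtain ⟨M, hM⟩ :=
    ((isCompact_sphere c |R|).prod (spectrum.isCompact a)).exists_bound_of_continuousOn hF
  have hint : ContinuousOn (fun z ↦ ∫ θ in 0..2 * π, F (circleMap c R θ) z) (spectrum ℂ a) := by
    convert hF.circleAverage_of_uncurry.const_smul (2 * π) using 2 with z
    rw [Pi.smul_apply, circleAverage_def, smul_inv_smul₀ two_pi_pos.ne']
  simp_rw [circleAverage_def, cfc_smul _ _ a hint, intervalIntegral.integral_of_le two_pi_pos.le]
  rw [cfc_integral _ (fun _ ↦ M) a (continuousOn_uncurry_comp_circleMap hF)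
    (ae_of_all _ fun θ z hz ↦ hM (circleMap c R θ, z) ⟨circleMap_mem_sphere' c R θ, hz⟩)
    (hasFiniteIntegral_const M)]

end CircleAverage

lemma ringInverse_cfc_sub_smul_one {a : A} (ha : IsStarNormal a) {f : ℂ → ℂ}
    (hf : ContinuousOn f (spectrum ℂ a)) {c : ℂ} (hc : ∀ z ∈ spectrum ℂ a, f z ≠ c) :
    Ring.inverse (cfc f a - c • 1) = cfc (fun z ↦ (f z - c)⁻¹) a := by
  rw [cfc_inv (fun z ↦ f z - c) a (fun z hz ↦ sub_ne_zero.mpr (hc z hz)),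
    cfc_sub f (fun _ ↦ c) a, cfc_const c a, Algebra.algebraMap_eq_smul_one]

lemma ringInverse_mul_ringInverse_eq_cfc {u : A} (hu : u ∈ unitary A) {c : ℂ} (hc : ‖c‖ ≠ 1) :
    Ring.inverse (u - c • 1) * Ring.inverse (Ring.inverse u - conj c • 1) =
      cfc (fun z ↦ ((‖z - c‖ ^ 2 : ℝ) : ℂ)⁻¹) u := by
  have hu' : IsStarNormal u := isStarNormal_of_mem_unitary hu
  have hspec : ∀ z ∈ spectrum ℂ u, ‖z‖ = 1 := fun z hz ↦ spectrum.norm_eq_one_of_unitary hu hz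
  have hinv : ContinuousOn (fun z : ℂ ↦ z⁻¹) (spectrum ℂ u) :=
    continuousOn_inv₀.mono fun z hz ↦ norm_ne_zero_iff.mp (by simp [hspec z hz])
  have hc₁ : ∀ z ∈ spectrum ℂ u, z ≠ c := fun z hz h ↦ hc (h ▸ hspec z hz)
  have hc₂ : ∀ z ∈ spectrum ℂ u, z⁻¹ ≠ conj c := fun z hz h ↦ hc (by
    rw [← norm_conj, ← h, norm_inv, hspec z hz, inv_one])
  have h₁ : Ring.inverse (u - c • 1) = cfc (fun z ↦ (z - c)⁻¹) u := by
    simpa only [cfc_id' ℂ u] using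
      ringInverse_cfc_sub_smul_one hu' (f := fun z ↦ z) continuousOn_id hc₁
  have h₂ : Ring.inverse (Ring.inverse u - conj c • 1) = cfc (fun z ↦ (z⁻¹ - conj c)⁻¹) u := by
    rw [← cfc_ringInverse_id (R := ℂ) u (Unitary.isUnit_coe (U := ⟨u, hu⟩))]
    exact ringInverse_cfc_sub_smul_one hu' hinv hc₂
  rw [h₁, h₂, ← cfc_mul (fun z ↦ (z - c)⁻¹) (fun z ↦ (z⁻¹ - conj c)⁻¹) u
    ((continuousOn_id.sub continuousOn_const).inv₀ fun z hz ↦ sub_ne_zero.mpr (hc₁ z hz))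
    ((hinv.sub continuousOn_const).inv₀ fun z hz ↦ sub_ne_zero.mpr (hc₂ z hz))]
  refine cfc_congr fun z hz ↦ ?_
  rw [← mul_inv, inv_eq_conj (hspec z hz), ← map_sub, mul_conj']
  push_cast
  rfl

lemma cfc_poissonKernel_eq {u : A} (hu : u ∈ unitary A) {ζ : ℂ} (hζ : ‖ζ‖ = 1) {r : ℝ}
    (hr : |r| < 1) :
    cfc (fun z ↦ (poissonKernel 0 (r * z) ζ : ℂ)) u = (1 - (r : ℂ) ^ 2) •
      (Ring.inverse (u - (r * ζ) • 1) * Ring.inverse (Ring.inverse u - (r * conj ζ) • 1)) := by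
  have hc : ‖(r : ℂ) * ζ‖ ≠ 1 := by simpa [hζ] using hr.ne
  have hspec : ∀ z ∈ spectrum ℂ u, ‖z‖ = 1 := fun z hz ↦ spectrum.norm_eq_one_of_unitary hu hz
  have hcont : ContinuousOn (fun z : ℂ ↦ ((‖z - r * ζ‖ ^ 2 : ℝ) : ℂ)⁻¹) (spectrum ℂ u) :=
    ContinuousOn.inv₀ (by fun_prop) fun z hz ↦ by
      have hz' : z ≠ r * ζ := fun h ↦ hc (h ▸ hspec z hz)
      exact_mod_cast pow_ne_zero 2 (norm_ne_zero_iff.mpr (sub_ne_zero.mpr hz'))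
  rw [show (r : ℂ) * conj ζ = conj (r * ζ) by simp, ringInverse_mul_ringInverse_eq_cfc hu hc,
    ← cfc_const_mul _ _ _ hcont]
  refine cfc_congr fun z hz ↦ ?_
  rw [poissonKernel_zero_mul_eq r (hspec z hz) hζ]
  push_cast
  rfl

lemma cfc_poissonKernel_smul_eq {u : A} (hu : u ∈ unitary A) {ζ : ℂ} (hζ : ‖ζ‖ = 1) {r : ℝ}
    (hr : |r| < 1) (v : ℂ) :
    cfc (fun z ↦ poissonKernel 0 (r * z) ζ • v) u = (v * (1 - (r : ℂ) ^ 2)) •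
      (Ring.inverse (u - (r * ζ) • 1) * Ring.inverse (Ring.inverse u - (r * conj ζ) • 1)) := by
  have hP : ContinuousOn (fun z : ℂ ↦ (poissonKernel 0 (r * z) ζ : ℂ)) (spectrum ℂ u) :=
    continuous_ofReal.comp_continuousOn ((continuousOn_poissonKernel_zero_mul hr).comp
      (f := fun z ↦ (ζ, z)) (by fun_prop) fun z hz ↦
        ⟨mem_sphere_zero_iff_norm.mpr hζ, spectrum.subset_circle_of_unitary hu hz⟩)
  simp_rw [real_smul, mul_comm _ v]
  rw [cfc_const_mul v _ u hP, cfc_poissonKernel_eq hu hζ hr, smul_smul]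

end FunctionalCalculus

lemma inner_cfc_circleAverage_poissonKernel_smul {H : Type*} [NormedAddCommGroup H]
    [InnerProductSpace ℂ H] [CompleteSpace H] {U : H →L[ℂ] H} (hU : U ∈ unitary (H →L[ℂ] H))
    (φ : H) {f : ℂ → ℂ} (hf : Continuous f) {r : ℝ} (hr : |r| < 1) :
    ⟪φ, cfc (fun z ↦ circleAverage (poissonKernel 0 (r * z) • f) 0 1) U φ⟫_ℂ =
      (1 / (2 * π) : ℂ) * ∫ θ in (0 : ℝ)..(2 * π),
        (1 - (r : ℂ) ^ 2) *
          ⟪φ, ((Ring.inverse (U - ((r : ℂ) * exp ((θ : ℂ) * I)) • 1)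
            ∘L Ring.inverse ((Ring.inverse U) - ((r : ℂ) * exp (-(θ : ℂ) * I)) • 1))) φ⟫_ℂ *
          f (exp ((θ : ℂ) * I)) := by
  have hN : IsStarNormal U := isStarNormal_of_mem_unitary hU
  have hspec : spectrum ℂ U ⊆ sphere 0 1 := spectrum.subset_circle_of_unitary hU
  set F : ℂ → ℂ → ℂ := fun ζ z ↦ poissonKernel 0 (r * z) ζ • f ζ
  have hF : ContinuousOn (Function.uncurry F) (sphere 0 |1| ×ˢ spectrum ℂ U) := by
    rw [abs_one]
    exact (continuousOn_uncurry_poissonKernel_mul_smul hf.continuousOn hr).mono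
      (Set.prod_mono le_rfl hspec)
  let L : (H →L[ℂ] H) →L[ℝ] ℂ := ((innerSL ℂ φ).comp (apply ℂ H φ)).restrictScalars ℝ
  change L (cfc (fun z ↦ circleAverage (F · z) 0 1) U) = _
  rw [cfc_circleAverage hN hF, ← L.circleAverage_comp_comm (circleIntegrable_cfc hN hF),
    circleAverage_def, real_smul, one_div]
  push_cast
  congr 1
  refine intervalIntegral.integral_congr fun θ _ ↦ ?_
  have hζ : ‖exp ((θ : ℂ) * I)‖ = 1 := norm_exp_ofReal_mul_I θ
  have hconj : exp (-(θ : ℂ) * I) = conj (exp ((θ : ℂ) * I)) := by rw [← exp_conj]; simp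
  simp only [Function.comp_apply, circleMap_zero, ofReal_one, one_mul, F]
  rw [cfc_poissonKernel_smul_eq hU hζ hr, hconj]
  simp only [L, coe_restrictScalars', map_smul, mul_def, comp_apply, apply_apply,
    coe_innerSL_apply, smul_eq_mul]
  ring

theorem stmt11_general {H : Type*} [NormedAddCommGroup H] [InnerProductSpace ℂ H] [CompleteSpace H]
    (U : H →L[ℂ] H) (hU : U ∈ unitary (H →L[ℂ] H)) (φ : H)
    (f : ℂ → ℂ) (hf : Continuous f) :
    Tendsto
      (fun r : ℝ => (1 / (2 * Real.pi) : ℂ) *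
        ∫ θ in (0:ℝ)..(2 * Real.pi),
          (1 - (r : ℂ) ^ 2) *
            ⟪φ, ((Ring.inverse (U - ((r : ℂ) * Complex.exp ((θ : ℂ) * Complex.I)) • 1)
              ∘L Ring.inverse ((Ring.inverse U) -
                ((r : ℂ) * Complex.exp (-(θ : ℂ) * Complex.I)) • 1))) φ⟫_ℂ *
            f (Complex.exp ((θ : ℂ) * Complex.I)))
      (nhdsWithin (1 : ℝ) (Set.Iio 1))
      (nhds ⟪φ, (cfc f U) φ⟫_ℂ) := by
  have hspec : spectrum ℂ U ⊆ sphere 0 1 := spectrum.subset_circle_of_unitary hU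
  have hr : ∀ᶠ r : ℝ in 𝓝[<] 1, |r| < 1 :=
    Filter.mem_of_superset (Ioo_mem_nhdsLT (by norm_num : (-1 : ℝ) < 1)) fun r hr ↦ abs_lt.mpr hr
  have hlim : Tendsto (fun r : ℝ ↦ cfc (fun z ↦ circleAverage (poissonKernel 0 (r * z) • f) 0 1) U)
      (𝓝[<] 1) (𝓝 (cfc f U)) :=
    tendsto_cfc_fun ((tendstoUniformlyOn_circleAverage_poissonKernel_smul hf.continuousOn).mono
      hspec) (hr.mono fun r hr ↦
        (continuousOn_circleAverage_poissonKernel_mul_smul hf.continuousOn hr).mono hspec)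
  refine ((((innerSL ℂ φ).comp (apply ℂ H φ)).continuous.tendsto _).comp hlim).congr' ?_
  filter_upwards [hr] with r hr
  exact inner_cfc_circleAverage_poissonKernel_smul hU φ hf hr

/-- Poisson representation of the continuous functional calculus of a unitary operator:
`⟨φ, f(U) φ⟩ = lim_{r→1⁻} (1/2π) ∫₀^{2π} (1-r²) ⟨φ, (U-re^{iθ})⁻¹(U⁻¹-re^{-iθ})⁻¹ φ⟩ f(e^{iθ}) dθ`. -/
theorem stmt11 {H : Type*} [NormedAddCommGroup H] [InnerProductSpace ℂ H] [CompleteSpace H]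
    [Nontrivial H]
    (U : H →L[ℂ] H) (hU : U ∈ unitary (H →L[ℂ] H)) (φ : H) (hφ : ‖φ‖ = 1)
    (f : ℂ → ℂ) (hf : Continuous f) :
    Tendsto
      (fun r : ℝ => (1 / (2 * Real.pi) : ℂ) *
        ∫ θ in (0:ℝ)..(2 * Real.pi),
          (1 - (r : ℂ) ^ 2) *
            ⟪φ, ((Ring.inverse (U - ((r : ℂ) * Complex.exp ((θ : ℂ) * Complex.I)) • 1)
              ∘L Ring.inverse ((Ring.inverse U) -
                ((r : ℂ) * Complex.exp (-(θ : ℂ) * Complex.I)) • 1))) φ⟫_ℂ *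
            f (Complex.exp ((θ : ℂ) * Complex.I)))
      (nhdsWithin (1 : ℝ) (Set.Iio 1))
      (nhds ⟪φ, (cfc f U) φ⟫_ℂ) :=
  stmt11_general U hU φ f hf
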